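/- Let $\{X_n\}_{n\ge 1}$ be a sequence of independent random variables in a sub-linear expectation space $(\Omega, \mathcal{H}, \mathbb{E})$ satisfying the condition (CC) with a countable-dimensionally weakly compact family $\mathcal{P}$ of probability measures. If $\sum_{n=1}^{\infty} \underline{v}(X_n < 1) < \infty$, where $\underline{v}$ is a lower capacity associated with $\mathbb{E}$, then there exists a probability measure $P \in \mathcal{P}$ such that $P(X_n < 1 \text{ i.o.}) = 0$, i.e., $P\big(\bigcup_{m=1}^{\infty} \bigcap_{i=m}^{\infty} \{X_i \ge 1\}\big) = 1$. -/

import Mathlib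

open Filter MeasureTheory

noncomputable section

/-- The class `C_{l,Lip}` of local Lipschitz functions with polynomial growth. -/
def ClLip {n : ℕ} (φ : (Fin n → ℝ) → ℝ) : Prop :=
  ∃ C : ℝ, 0 < C ∧ ∃ m : ℕ, ∀ x y : Fin n → ℝ,
    |φ x - φ y| ≤ C * (1 + ‖x‖ ^ m + ‖y‖ ^ m) * ‖x - y‖

/-- A sub-linear expectation space `(Ω, H, E)` in the sense of Peng. -/
structure SLE (Ω : Type*) where
  H : Set (Ω → ℝ)
  E : (Ω → ℝ) → ℝ
  const_mem : ∀ c : ℝ, (fun _ => c) ∈ H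
  comp_mem : ∀ (n : ℕ) (φ : (Fin n → ℝ) → ℝ), ClLip φ →
    ∀ X : Fin n → Ω → ℝ, (∀ i, X i ∈ H) → (fun ω => φ (fun i => X i ω)) ∈ H
  mono : ∀ X Y, X ∈ H → Y ∈ H → (∀ ω, X ω ≤ Y ω) → E X ≤ E Y
  isConst : ∀ c : ℝ, E (fun _ => c) = c
  subadd : ∀ X Y, X ∈ H → Y ∈ H → E (fun ω => X ω + Y ω) ≤ E X + E Y
  poshom : ∀ c : ℝ, 0 < c → ∀ X, X ∈ H → E (fun ω => c * X ω) = c * E X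

variable {Ω : Type*}

/-- The conjugate (lower) expectation. -/
def SLE.eps (S : SLE Ω) (X : Ω → ℝ) : ℝ := -S.E (fun ω => -X ω)

/-- `Y` (a `q`-vector) is independent of `X` (a `p`-vector) in Peng's sense. -/
def IndepVec (S : SLE Ω) {p q : ℕ} (X : Fin p → Ω → ℝ) (Y : Fin q → Ω → ℝ) : Prop :=
  ∀ φ : (Fin p → ℝ) → (Fin q → ℝ) → ℝ,
    (∃ K : NNReal, LipschitzWith K (Function.uncurry φ)) →
    (∃ M : ℝ, ∀ x y, |φ x y| ≤ M) →
    S.E (fun ω => φ (fun i => X i ω) (fun j => Y j ω)) =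
      S.E (fun ω => S.E (fun ω' => φ (fun i => X i ω) (fun j => Y j ω')))

/-- A sequence is independent if `X_{i+1}` is independent of `(X_0, …, X_i)`. -/
def IndepSeq (S : SLE Ω) (X : ℕ → Ω → ℝ) : Prop :=
  ∀ i : ℕ, IndepVec S (fun j : Fin (i + 1) => X j.val) (fun _ : Fin 1 => X (i + 1))

/-- The upper capacity `V̂` generated by the sub-linear expectation. -/
def hatV (S : SLE Ω) (A : Set Ω) : ℝ :=
  sInf {r | ∃ ξ ∈ S.H, (∀ ω, Set.indicator A (fun _ => (1 : ℝ)) ω ≤ ξ ω) ∧ S.E ξ = r}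

/-- The countably sub-additive extension `V*` of `V̂`. -/
def Vstar (S : SLE Ω) (A : Set Ω) : ℝ :=
  sInf {r | ∃ B : ℕ → Set Ω, (A ⊆ ⋃ n, B n) ∧
    Summable (fun n => hatV S (B n)) ∧ r = ∑' n, hatV S (B n)}

/-- Truncation `X^{(c)} = (-c) ∨ X ∧ c`. -/
def trunc (c : ℝ) (X : Ω → ℝ) : Ω → ℝ := fun ω => max (-c) (min (X ω) c)

/-- Membership in `H₁ = {X ∈ H : lim_{c,d→∞} E[(|X| ∧ d - c)⁺] = 0}`. -/
def memH1 (S : SLE Ω) (X : Ω → ℝ) : Prop :=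
  X ∈ S.H ∧
    Tendsto (fun cd : ℝ × ℝ => S.E (fun ω => max (min |X ω| cd.2 - cd.1) 0))
      (atTop ×ˢ atTop) (nhds 0)

/-- Two real random variables are identically distributed (Peng's sense). -/
def IdentDist1 (S : SLE Ω) (A B : Ω → ℝ) : Prop :=
  ∀ φ : ℝ → ℝ, (∃ K : NNReal, LipschitzWith K φ) → (∃ M : ℝ, ∀ x, |φ x| ≤ M) →
    S.E (fun ω => φ (A ω)) = S.E (fun ω => φ (B ω))

/-- `m`-dependence: `(X_{n+m+1}, …, X_{n+j})` is independent of `(X_1, …, X_n)`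
(indices here are 0-based: `X 0` plays the role of `X_1`). -/
def MDep (S : SLE Ω) (m : ℕ) (X : ℕ → Ω → ℝ) : Prop :=
  ∀ n : ℕ, 1 ≤ n → ∀ j : ℕ, m + 1 ≤ j →
    IndepVec S (fun i : Fin n => X i.val) (fun i : Fin (j - m) => X (n + m + i.val))

/-- Linear stationarity: `X_1 + ⋯ + X_n ≐ X_{1+p} + ⋯ + X_{n+p}`. -/
def LinStat (S : SLE Ω) (X : ℕ → Ω → ℝ) : Prop :=
  ∀ n : ℕ, 1 ≤ n → ∀ p : ℕ,
    IdentDist1 S (fun ω => ∑ i ∈ Finset.range n, X i ω)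
      (fun ω => ∑ i ∈ Finset.range n, X (p + i) ω)

/-- Condition (CC): `E` is represented by a countable-dimensionally weakly
compact family `P` of probability measures. -/
def CC [MeasurableSpace Ω] (S : SLE Ω) (P : Set (Measure Ω)) : Prop :=
  P.Nonempty ∧ (∀ p ∈ P, IsProbabilityMeasure p) ∧
  (∀ X ∈ S.H, (∃ M : ℝ, ∀ ω, |X ω| ≤ M) → S.E X = ⨆ p ∈ P, ∫ ω, X ω ∂p) ∧
  (∀ Y : ℕ → Ω → ℝ, (∀ n, Y n ∈ S.H ∧ ∃ M : ℝ, ∀ ω, |Y n ω| ≤ M) →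
    ∀ p : ℕ → Measure Ω, (∀ n, p n ∈ P) →
      ∃ k : ℕ → ℕ, StrictMono k ∧ ∃ Q ∈ P,
        ∀ (d : ℕ) (φ : (Fin d → ℝ) → ℝ),
          (∃ K : NNReal, LipschitzWith K φ) → (∃ M : ℝ, ∀ x, |φ x| ≤ M) →
          Tendsto (fun j => ∫ ω, φ (fun i : Fin d => Y i.val ω) ∂(p (k j))) atTop
            (nhds (∫ ω, φ (fun i : Fin d => Y i.val ω) ∂Q)))

/-!
Let `ramp n` be the piecewise linear function equal to `1` on `[1, ∞)` and to `0` on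
`(-∞, 1 - 1/n]`, and `rampProd m n X = ∏_{m ≤ i < n} ramp n (X i)`; as `n → ∞`, this decreases
to the indicator of `⋂_{i ≥ m} {X i ≥ 1}`. Since `1 - ramp n (X i) ≤ 1_{X i < 1}`, the lower
capacity gives `E[ramp n (X i)] ≥ 1 - v(X i < 1)`, and independence turns the expectation of a
product into the product of expectations, so `E[rampProd m n X] ≥ 1 - ∑_{i ≥ m} v(X i < 1)`.

The difficulty is that `E` is a supremum over `P`, and a measure nearly attaining
`E[rampProd m n X]` depends on `m`. With `μ r` chosen so that the tails of `∑ v(X i < 1)` beyond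
`μ r` are at most `4⁻ʳ`, one instead nearly maximises the single weighted sum
`∑_{r < j} 2ʳ rampProd (μ r) j X`: a measure `p_j ∈ P` within `1` of its expectation integrates
each `rampProd (μ r) j X`, `r < j`, to at least `1 - 3 · 2⁻ʳ`. A weak limit `Q ∈ P` of the `p_j`
inherits these bounds for every `rampProd (μ r) n X`, and dominated convergence gives
`Q(⋂_{i ≥ μ r} {X i ≥ 1}) ≥ 1 - 3 · 2⁻ʳ`.
-/
open Finset
open scoped NNReal

lemma LipschitzWith.mul_of_abs_le {α : Type*} [PseudoMetricSpace α] {f g : α → ℝ}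
    {Kf Kg A B : ℝ≥0} (hf : LipschitzWith Kf f) (hg : LipschitzWith Kg g)
    (hfA : ∀ x, |f x| ≤ A) (hgB : ∀ x, |g x| ≤ B) :
    LipschitzWith (A * Kg + B * Kf) (fun x => f x * g x) := by
  refine LipschitzWith.of_dist_le_mul fun x y => ?_
  have hfd := hf.dist_le_mul x y
  have hgd := hg.dist_le_mul x y
  rw [Real.dist_eq] at hfd hgd ⊢
  calc |f x * g x - f y * g y| = |f x * (g x - g y) + (f x - f y) * g y| := by ring_nf
    _ ≤ |f x| * |g x - g y| + |f x - f y| * |g y| := by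
        rw [← abs_mul, ← abs_mul]; exact abs_add_le _ _
    _ ≤ A * (Kg * dist x y) + (Kf * dist x y) * B := by
        gcongr
        exacts [hfA x, hgB y]
    _ = ↑(A * Kg + B * Kf) * dist x y := by push_cast; ring

lemma LipschitzWith.finset_sum {ι α : Type*} [PseudoEMetricSpace α] (s : Finset ι)
    {f : ι → α → ℝ} {K : ι → ℝ≥0} (hf : ∀ i ∈ s, LipschitzWith (K i) (f i)) :
    LipschitzWith (∑ i ∈ s, K i) (fun x => ∑ i ∈ s, f i x) := by
  classical
  induction s using Finset.induction_on with
  | empty => simp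
  | insert a s has ih =>
    simp only [sum_insert has]
    exact (hf a (mem_insert_self a s)).add (ih fun i hi => hf i (mem_insert_of_mem hi))

lemma LipschitzWith.finset_prod_of_abs_le_one {ι α : Type*} [PseudoMetricSpace α]
    (s : Finset ι) {f : ι → α → ℝ} {K : ι → ℝ≥0} (hf : ∀ i ∈ s, LipschitzWith (K i) (f i))
    (hf1 : ∀ i ∈ s, ∀ x, |f i x| ≤ 1) :
    LipschitzWith (∑ i ∈ s, K i) (fun x => ∏ i ∈ s, f i x) := by
  classical
  induction s using Finset.induction_on with
  | empty => simp
  | insert a s has ih =>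
    have hprod := ih (fun i hi => hf i (mem_insert_of_mem hi))
      (fun i hi => hf1 i (mem_insert_of_mem hi))
    have h := (hf a (mem_insert_self a s)).mul_of_abs_le hprod (A := 1) (B := 1)
      (hf1 a (mem_insert_self a s)) fun x => by
        rw [abs_prod]; exact prod_le_one (fun _ _ => abs_nonneg _)
          fun i hi => hf1 i (mem_insert_of_mem hi) x
    simp only [prod_insert has, sum_insert has]
    simpa only [one_mul, add_comm] using h

lemma LipschitzWith.clLip {n : ℕ} {φ : (Fin n → ℝ) → ℝ} {K : ℝ≥0} (hφ : LipschitzWith K φ) :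
    ClLip φ := by
  refine ⟨K + 1, by positivity, 0, fun x y => ?_⟩
  have h := hφ.dist_le_mul x y
  rw [Real.dist_eq, dist_eq_norm] at h
  have hK : (K : ℝ) ≤ (K + 1) * (1 + ‖x‖ ^ 0 + ‖y‖ ^ 0) := by
    simp only [pow_zero]; linarith [K.coe_nonneg]
  exact h.trans (mul_le_mul_of_nonneg_right hK (norm_nonneg _))

lemma prod_mem_Icc_zero_one {ι : Type*} (s : Finset ι) {f : ι → ℝ}
    (hf : ∀ i ∈ s, f i ∈ Set.Icc (0 : ℝ) 1) : ∏ i ∈ s, f i ∈ Set.Icc (0 : ℝ) 1 :=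
  ⟨prod_nonneg fun i hi => (hf i hi).1,
    prod_le_one (fun i hi => (hf i hi).1) fun i hi => (hf i hi).2⟩

lemma one_sub_sum_le_prod {ι : Type*} (s : Finset ι) {e : ι → ℝ}
    (he : ∀ i ∈ s, e i ∈ Set.Icc (0 : ℝ) 1) : 1 - ∑ i ∈ s, (1 - e i) ≤ ∏ i ∈ s, e i := by
  classical
  induction s using Finset.induction_on with
  | empty => simp
  | insert a s has ih =>
    have hP := ih fun i hi => he i (mem_insert_of_mem hi)
    have hP1 := (prod_mem_Icc_zero_one s fun i hi => he i (mem_insert_of_mem hi)).2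
    obtain ⟨ha0, ha1⟩ := he a (mem_insert_self a s)
    rw [prod_insert has, sum_insert has]
    nlinarith

lemma Fin.prod_filter_le_eq_prod_Ico {M : Type*} [CommMonoid M] (f : ℕ → M) (m N : ℕ) :
    ∏ i ∈ univ.filter (fun i : Fin N => m ≤ (i : ℕ)), f i = ∏ i ∈ Ico m N, f i := by
  rw [prod_filter, Fin.prod_univ_eq_prod_range (fun i => if m ≤ i then f i else 1)]
  rw [← prod_filter]
  congr 1
  ext i
  simp only [mem_filter, mem_range, mem_Ico]
  omega

lemma sum_mul_prod_Ico_succ {ι : Type*} (I : Finset ι) (a : ι → ℝ) (m : ι → ℕ) (N : ℕ)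
    (y : ℕ → ℝ) :
    ∑ r ∈ I, a r * ∏ i ∈ Ico (m r) (N + 1), y i =
      (∑ r ∈ I with m r ≤ N, a r * ∏ i ∈ Ico (m r) N, y i) * y N +
        ∑ r ∈ I with ¬ m r ≤ N, a r := by
  rw [← sum_filter_add_sum_filter_not I (fun r => m r ≤ N), sum_mul]
  congr 1
  · refine sum_congr rfl fun r hr => ?_
    rw [prod_Ico_succ_top (mem_filter.1 hr).2, mul_assoc]
  · refine sum_congr rfl fun r hr => ?_
    rw [Ico_eq_empty_of_le (by have := (mem_filter.1 hr).2; omega), prod_empty, mul_one]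

lemma exists_forall_sum_Ico_le {f : ℕ → ℝ} (hf : Summable f) {δ : ℝ} (hδ : 0 < δ) :
    ∃ m, ∀ n, ∑ i ∈ Ico m n, f i ≤ δ := by
  obtain ⟨s, hs⟩ := hf.vanishing (Iio_mem_nhds hδ)
  refine ⟨s.sup id + 1, fun n => (hs _ (disjoint_left.2 fun i hi his => ?_)).le⟩
  have := le_sup (f := id) his
  have := (mem_Ico.1 hi).1
  simp only [id] at *
  omega

lemma exists_lipschitzWith_sum_mul_prod {h : ℝ → ℝ} {K : ℝ≥0} (hh : LipschitzWith K h)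
    (hh01 : ∀ y, h y ∈ Set.Icc (0 : ℝ) 1) {ι : Type*} (I : Finset ι) {a : ι → ℝ}
    (ha : ∀ r, 0 ≤ a r) (m : ι → ℕ) (N : ℕ) :
    ∃ φ : (Fin N → ℝ) → ℝ, (∃ K', LipschitzWith K' φ) ∧
      (∀ x, φ x ∈ Set.Icc 0 (∑ r ∈ I, a r)) ∧
      ∀ y : ℕ → ℝ, φ (fun i => y i) = ∑ r ∈ I, a r * ∏ i ∈ Ico (m r) N, h (y i) := by
  refine ⟨fun x => ∑ r ∈ I, a r * ∏ i ∈ univ.filter (fun i : Fin N => m r ≤ (i : ℕ)), h (x i),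
    ⟨_, LipschitzWith.finset_sum I fun r _ =>
      (lipschitzWith_smul (a r)).comp (LipschitzWith.finset_prod_of_abs_le_one _
        (fun i _ => hh.comp (LipschitzWith.eval i)) fun i _ x => abs_le.2
          ⟨by linarith [(hh01 (x i)).1], (hh01 _).2⟩)⟩,
    fun x => ?_, fun y => by simp only [Fin.prod_filter_le_eq_prod_Ico (fun i => h (y i))]⟩
  have hprod := fun r => prod_mem_Icc_zero_one
    (univ.filter (fun i : Fin N => m r ≤ (i : ℕ))) fun i _ => hh01 (x i)
  exact ⟨sum_nonneg fun r _ => mul_nonneg (ha r) (hprod r).1,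
    sum_le_sum fun r _ => mul_le_of_le_one_right (ha r) (hprod r).2⟩

lemma ofReal_le_measure_of_tendsto_indicator {α : Type*} [MeasurableSpace α] {μ : Measure α}
    [IsFiniteMeasure μ] {F : ℕ → α → ℝ} {s : Set α} {c : ℝ} (hF : ∀ n, Integrable (F n) μ)
    (hF1 : ∀ n x, |F n x| ≤ 1) (hlim : ∀ x, Tendsto (F · x) atTop (nhds (s.indicator 1 x)))
    (hc : ∀ n, c ≤ ∫ x, F n x ∂μ) : ENNReal.ofReal c ≤ μ s := by
  have hint := tendsto_integral_of_dominated_convergence (fun _ => (1 : ℝ))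
    (fun n => (hF n).aestronglyMeasurable) (integrable_const 1)
    (fun n => Eventually.of_forall fun x => (Real.norm_eq_abs _).trans_le (hF1 n x))
    (Eventually.of_forall hlim)
  refine (ENNReal.ofReal_le_ofReal (ge_of_tendsto' hint hc)).trans
    (integral_le_measure (fun x hx => ?_) fun x hx => ?_)
  · simp [Set.indicator_of_mem hx]
  · simp [Set.indicator_of_notMem hx]

namespace SLE

variable (S : SLE Ω)

lemma comp_mem_of_lipschitzWith {n : ℕ} {φ : (Fin n → ℝ) → ℝ} {K : ℝ≥0}
    (hφ : LipschitzWith K φ) {X : Fin n → Ω → ℝ} (hX : ∀ i, X i ∈ S.H) :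
    (fun ω => φ (fun i => X i ω)) ∈ S.H :=
  S.comp_mem n φ hφ.clLip X hX

lemma comp_mem_of_lipschitzWith₁ {f : ℝ → ℝ} {K : ℝ≥0} (hf : LipschitzWith K f)
    {Z : Ω → ℝ} (hZ : Z ∈ S.H) : (fun ω => f (Z ω)) ∈ S.H :=
  S.comp_mem_of_lipschitzWith (φ := fun x : Fin 1 → ℝ => f (x 0))
    (hf.comp (LipschitzWith.eval 0)) fun _ => hZ

variable {S} {Z : Ω → ℝ}

lemma E_le_of_le (hZ : Z ∈ S.H) {c : ℝ} (h : ∀ ω, Z ω ≤ c) : S.E Z ≤ c :=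
  (S.mono _ _ hZ (S.const_mem c) h).trans_eq (S.isConst c)

lemma le_E_of_le (hZ : Z ∈ S.H) {c : ℝ} (h : ∀ ω, c ≤ Z ω) : c ≤ S.E Z :=
  (S.isConst c).symm.trans_le (S.mono _ _ (S.const_mem c) hZ h)

lemma add_const_mem (hZ : Z ∈ S.H) (c : ℝ) : (fun ω => Z ω + c) ∈ S.H :=
  S.comp_mem_of_lipschitzWith₁ (LipschitzWith.id.add (LipschitzWith.const c)) hZ

lemma E_add_const (hZ : Z ∈ S.H) (c : ℝ) : S.E (fun ω => Z ω + c) = S.E Z + c := by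
  refine le_antisymm ((S.subadd _ _ hZ (S.const_mem c)).trans_eq (by rw [S.isConst])) ?_
  have h := S.subadd _ _ (S.add_const_mem hZ c) (S.const_mem (-c))
  simp only [add_neg_cancel_right, S.isConst] at h
  linarith

lemma E_const_mul (hZ : Z ∈ S.H) {a : ℝ} (ha : 0 ≤ a) :
    S.E (fun ω => a * Z ω) = a * S.E Z := by
  rcases ha.eq_or_lt with rfl | ha
  · simp only [zero_mul, S.isConst]
  · exact S.poshom a ha Z hZ

lemma E_mul_add_const (hZ : Z ∈ S.H) {a : ℝ} (ha : 0 ≤ a) (c : ℝ) :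
    S.E (fun ω => a * Z ω + c) = a * S.E Z + c := by
  have hmem : (fun ω => a * Z ω) ∈ S.H :=
    S.comp_mem_of_lipschitzWith₁ (lipschitzWith_smul a) hZ
  rw [E_add_const hmem, E_const_mul hZ ha]

end SLE

namespace CC

variable [MeasurableSpace Ω] {S : SLE Ω} {P : Set (Measure Ω)} {Z : Ω → ℝ} {M : ℝ}

lemma integral_le_E (hCC : CC S P) (hZ : Z ∈ S.H) (hM : ∀ ω, |Z ω| ≤ M) {p : Measure Ω}
    (hp : p ∈ P) : ∫ ω, Z ω ∂p ≤ S.E Z := by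
  have := hCC.2.1 p hp
  have hbound : ∀ q : Measure Ω, ⨆ _ : q ∈ P, ∫ ω, Z ω ∂q ≤ |M| := fun q =>
    Real.iSup_le (fun hq => by
      have := hCC.2.1 q hq
      have := norm_integral_le_of_norm_le_const (μ := q)
        (Eventually.of_forall fun ω => (Real.norm_eq_abs _).trans_le (hM ω))
      simp only [Real.norm_eq_abs, probReal_univ, mul_one] at this
      exact (le_abs_self _).trans (this.trans (le_abs_self M))) (abs_nonneg M)
  rw [hCC.2.2.1 Z hZ ⟨M, hM⟩]
  refine le_trans ?_ (le_ciSup ⟨|M|, Set.forall_mem_range.2 hbound⟩ p)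
  rw [ciSup_pos hp]

lemma integrable (hCC : CC S P) (hZ : Z ∈ S.H) (hM : ∀ ω, |Z ω| ≤ M) {p : Measure Ω}
    (hp : p ∈ P) : Integrable Z p := by
  have := hCC.2.1 p hp
  by_contra hni
  -- Shifting `Z` down keeps it non-integrable, so its integral stays `0` while `E` drops below `0`.
  have hW := S.add_const_mem hZ (-(|M| + 1))
  have hWni : ¬ Integrable (fun ω => Z ω + -(|M| + 1)) p := fun h =>
    hni (by simpa using h.add (integrable_const (|M| + 1)))
  have hle := hCC.integral_le_E hW (M := |M| + (|M| + 1)) (fun ω =>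
    (abs_add_le _ _).trans (add_le_add ((hM ω).trans (le_abs_self M))
      (by rw [abs_neg, abs_of_pos (by positivity)]))) hp
  rw [integral_undef hWni, SLE.E_add_const hZ] at hle
  have := SLE.E_le_of_le hZ fun ω => (le_abs_self _).trans ((hM ω).trans (le_abs_self M))
  linarith

lemma exists_lt_integral (hCC : CC S P) (hZ : Z ∈ S.H) (hM : ∀ ω, |Z ω| ≤ M) {ε : ℝ}
    (hε : 0 < ε) : ∃ p ∈ P, S.E Z - ε < ∫ ω, Z ω ∂p := by
  by_contra! hcon
  -- Shifted up by `|M| + ε`, every integral is nonnegative, so the junk value `0` of the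
  -- supremum over `p ∉ P` cannot exceed the bound.
  set c := |M| + ε
  have hW := S.add_const_mem hZ c
  have hrep := hCC.2.2.1 _ hW ⟨|M| + c, fun ω => (abs_add_le _ _).trans
    (add_le_add ((hM ω).trans (le_abs_self M)) (abs_of_pos (by positivity)).le)⟩
  have hpos : 0 ≤ S.E Z + c - ε := by
    have := SLE.le_E_of_le hZ fun ω => (neg_le_of_abs_le ((hM ω).trans (le_abs_self M)))
    simp only [c]; linarith
  have hle : (⨆ p ∈ P, ∫ ω, Z ω + c ∂p) ≤ S.E Z + c - ε := by
    refine Real.iSup_le (fun p => Real.iSup_le (fun hp => ?_) hpos) hpos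
    have := hCC.2.1 p hp
    rw [integral_add (hCC.integrable hZ hM hp) (integrable_const c)]
    simp only [integral_const, probReal_univ, smul_eq_mul, one_mul]
    linarith [hcon p hp]
  rw [← hrep, SLE.E_add_const hZ] at hle
  linarith

end CC

namespace IndepSeq

variable {S : SLE Ω} {X : ℕ → Ω → ℝ}

theorem E_mul_add_const (hind : IndepSeq S X) (hX : ∀ n, X n ∈ S.H) {N : ℕ}
    {φ : (Fin N → ℝ) → ℝ} {Kφ : ℝ≥0} (hφ : LipschitzWith Kφ φ) {A : ℝ}
    (hφA : ∀ x, φ x ∈ Set.Icc 0 A) {h : ℝ → ℝ} {Kh : ℝ≥0} (hh : LipschitzWith Kh h)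
    (hh01 : ∀ y, h y ∈ Set.Icc (0 : ℝ) 1) (c : ℝ) :
    S.E (fun ω => φ (fun i => X i ω) * h (X N ω) + c) =
      S.E (fun ω => φ (fun i => X i ω)) * S.E (fun ω => h (X N ω)) + c := by
  have hhX := S.comp_mem_of_lipschitzWith₁ hh (hX N)
  have he0 : 0 ≤ S.E (fun ω => h (X N ω)) := SLE.le_E_of_le hhX fun ω => (hh01 _).1
  cases N with
  | zero =>
    have hconst : ∀ ω, φ (fun i : Fin 0 => X i ω) = φ default :=
      fun ω => congrArg φ (Subsingleton.elim _ _)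
    simp only [hconst, S.isConst]
    exact SLE.E_mul_add_const hhX (hφA _).1 c
  | succ n =>
    have hφX := S.comp_mem_of_lipschitzWith hφ fun i : Fin (n + 1) => hX i
    have hφ₁ : LipschitzWith (Kφ * 1) fun p : (Fin (n + 1) → ℝ) × (Fin 1 → ℝ) => φ p.1 :=
      hφ.comp LipschitzWith.prod_fst
    have hh₂ : LipschitzWith (Kh * 1 * 1) fun p : (Fin (n + 1) → ℝ) × (Fin 1 → ℝ) => h (p.2 0) :=
      (hh.comp (LipschitzWith.eval (α := fun _ : Fin 1 => ℝ) 0)).comp LipschitzWith.prod_snd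
    have hψ : LipschitzWith _ fun p : (Fin (n + 1) → ℝ) × (Fin 1 → ℝ) => φ p.1 * h (p.2 0) + c :=
      (hφ₁.mul_of_abs_le hh₂ (A := A.toNNReal) (B := 1)
        (fun p => (abs_of_nonneg (hφA _).1).trans_le ((hφA _).2.trans (Real.le_coe_toNNReal A)))
        (fun p => (abs_of_nonneg (hh01 _).1).trans_le (hh01 _).2)).add (LipschitzWith.const c)
    have key := hind n (fun x y => φ x * h (y 0) + c) ⟨_, hψ⟩ ⟨A + |c|, fun x y => by
      have hxy : 0 ≤ φ x * h (y 0) ∧ φ x * h (y 0) ≤ A :=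
        ⟨mul_nonneg (hφA x).1 (hh01 _).1,
          (mul_le_of_le_one_right (hφA x).1 (hh01 _).2).trans (hφA x).2⟩
      exact (abs_add_le _ _).trans (add_le_add ((abs_of_nonneg hxy.1).trans_le hxy.2) le_rfl)⟩
    -- With the first `n + 1` coordinates frozen, the inner expectation is affine in `h (X (n + 1))`.
    simp only [SLE.E_mul_add_const hhX (hφA _).1 c] at key
    rw [key, mul_comm, ← SLE.E_mul_add_const hφX he0 c]
    simp_rw [mul_comm (φ _)]

theorem E_sum_mul_prod (hind : IndepSeq S X) (hX : ∀ n, X n ∈ S.H) {h : ℝ → ℝ} {K : ℝ≥0}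
    (hh : LipschitzWith K h) (hh01 : ∀ y, h y ∈ Set.Icc (0 : ℝ) 1) {ι : Type*} (I : Finset ι)
    {a : ι → ℝ} (ha : ∀ r, 0 ≤ a r) (m : ι → ℕ) (N : ℕ) :
    S.E (fun ω => ∑ r ∈ I, a r * ∏ i ∈ Ico (m r) N, h (X i ω)) =
      ∑ r ∈ I, a r * ∏ i ∈ Ico (m r) N, S.E (fun ω => h (X i ω)) := by
  induction N generalizing I with
  | zero => simp [S.isConst]
  | succ N ih =>
    -- Peel off `X N`: the terms with `m r ≤ N` carry the factor `h (X N)`, the others are constant.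
    obtain ⟨φ, ⟨Kφ, hφ⟩, hφA, hφX⟩ :=
      exists_lipschitzWith_sum_mul_prod hh hh01 (I.filter fun r => m r ≤ N) ha m N
    have key := hind.E_mul_add_const hX hφ hφA hh hh01 (∑ r ∈ I with ¬ m r ≤ N, a r)
    simp only [fun ω => hφX (X · ω)] at key
    simp only [sum_mul_prod_Ico_succ, key, ih]

end IndepSeq

def clamp01 (x : ℝ) : ℝ := max 0 (min 1 x)

lemma clamp01_mem_Icc (x : ℝ) : clamp01 x ∈ Set.Icc (0 : ℝ) 1 :=
  ⟨le_max_left _ _, max_le zero_le_one (min_le_left _ _)⟩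

lemma clamp01_of_one_le {x : ℝ} (hx : 1 ≤ x) : clamp01 x = 1 := by
  simp [clamp01, hx]

lemma clamp01_of_nonpos {x : ℝ} (hx : x ≤ 0) : clamp01 x = 0 := by
  simp [clamp01, min_le_of_right_le hx]

lemma lipschitzWith_clamp01 : LipschitzWith 1 clamp01 :=
  (LipschitzWith.id.const_min 1).const_max 0

def ramp (n : ℕ) (x : ℝ) : ℝ := clamp01 (n * (x - 1) + 1)

lemma ramp_mem_Icc (n : ℕ) (x : ℝ) : ramp n x ∈ Set.Icc (0 : ℝ) 1 := clamp01_mem_Icc _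

lemma ramp_of_one_le (n : ℕ) {x : ℝ} (hx : 1 ≤ x) : ramp n x = 1 :=
  clamp01_of_one_le (by nlinarith [n.cast_nonneg (α := ℝ)])

lemma lipschitzWith_ramp (n : ℕ) : LipschitzWith n (ramp n) := by
  have h : LipschitzWith n (fun x : ℝ => n * (x - 1) + 1) :=
    LipschitzWith.of_dist_le_mul fun x y => by
      simp [Real.dist_eq, ← mul_sub, abs_mul]
  rw [← one_mul (n : NNReal)]
  exact lipschitzWith_clamp01.comp h

lemma ramp_anti {m n : ℕ} (hmn : m ≤ n) (x : ℝ) : ramp n x ≤ ramp m x := by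
  rcases le_total 1 x with hx | hx
  · rw [ramp_of_one_le n hx, ramp_of_one_le m hx]
  · have : (n : ℝ) * (x - 1) ≤ m * (x - 1) :=
      mul_le_mul_of_nonpos_right (by exact_mod_cast hmn) (by linarith)
    unfold ramp clamp01
    gcongr

lemma ramp_clamp01 (n : ℕ) (x : ℝ) : ramp n (clamp01 x) = ramp n x := by
  rcases le_total 1 x with hx | hx
  · rw [clamp01_of_one_le hx, ramp_of_one_le n hx, ramp_of_one_le n le_rfl]
  rcases le_total x 0 with hx0 | hx0
  · rw [clamp01_of_nonpos hx0]
    rcases n.eq_zero_or_pos with rfl | hn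
    · simp [ramp]
    · have hn : (1 : ℝ) ≤ n := by exact_mod_cast hn
      rw [ramp, ramp, clamp01_of_nonpos (by nlinarith), clamp01_of_nonpos (by nlinarith)]
  · simp [clamp01, hx, hx0]

lemma tendsto_ramp_of_lt_one {x : ℝ} (hx : x < 1) : Tendsto (ramp · x) atTop (nhds 0) := by
  refine tendsto_const_nhds.congr' ?_
  obtain ⟨N, hN⟩ := exists_nat_gt (1 - x)⁻¹
  filter_upwards [eventually_ge_atTop N] with n hn
  have h1x : 0 < 1 - x := by linarith
  have : 1 ≤ (n : ℝ) * (1 - x) :=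
    calc 1 = (1 - x)⁻¹ * (1 - x) := (inv_mul_cancel₀ h1x.ne').symm
      _ ≤ n * (1 - x) := by gcongr; exact hN.le.trans (by exact_mod_cast hn)
  exact (clamp01_of_nonpos (by nlinarith)).symm

def rampProd (m n : ℕ) (y : ℕ → ℝ) : ℝ := ∏ i ∈ Ico m n, ramp n (y i)

lemma prod_ramp_mem_Icc (n : ℕ) (s : Finset ℕ) (y : ℕ → ℝ) :
    ∏ i ∈ s, ramp n (y i) ∈ Set.Icc (0 : ℝ) 1 :=
  prod_mem_Icc_zero_one s fun _ _ => ramp_mem_Icc _ _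

lemma rampProd_mem_Icc (m n : ℕ) (y : ℕ → ℝ) : rampProd m n y ∈ Set.Icc (0 : ℝ) 1 :=
  prod_ramp_mem_Icc n _ y

lemma abs_rampProd_le_one (m n : ℕ) (y : ℕ → ℝ) : |rampProd m n y| ≤ 1 :=
  abs_le.2 ⟨by linarith [(rampProd_mem_Icc m n y).1], (rampProd_mem_Icc m n y).2⟩

lemma rampProd_anti {m n n' : ℕ} (hn : n ≤ n') (y : ℕ → ℝ) :
    rampProd m n' y ≤ rampProd m n y := by
  have hsub : Ico m n ⊆ Ico m n' := Ico_subset_Ico_right hn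
  calc rampProd m n' y
      = (∏ i ∈ Ico m n' \ Ico m n, ramp n' (y i)) * ∏ i ∈ Ico m n, ramp n' (y i) :=
        (prod_sdiff hsub).symm
    _ ≤ ∏ i ∈ Ico m n, ramp n' (y i) :=
        mul_le_of_le_one_left (prod_ramp_mem_Icc n' _ y).1 (prod_ramp_mem_Icc n' _ y).2
    _ ≤ rampProd m n y :=
        prod_le_prod (fun _ _ => (ramp_mem_Icc _ _).1) fun _ _ => ramp_anti hn _

lemma tendsto_rampProd (m : ℕ) (y : ℕ → ℝ) :
    Tendsto (fun n => rampProd m n y) atTop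
      (nhds ({y : ℕ → ℝ | ∀ i, m ≤ i → 1 ≤ y i}.indicator 1 y)) := by
  by_cases hy : ∀ i, m ≤ i → 1 ≤ y i
  · rw [Set.indicator_of_mem (s := {y : ℕ → ℝ | ∀ i, m ≤ i → 1 ≤ y i}) hy, Pi.one_apply]
    exact tendsto_const_nhds.congr fun n =>
      (prod_eq_one fun i hi => ramp_of_one_le n (hy i (mem_Ico.1 hi).1)).symm
  · rw [Set.indicator_of_notMem (s := {y : ℕ → ℝ | ∀ i, m ≤ i → 1 ≤ y i}) hy]
    push Not at hy
    obtain ⟨i, hmi, hyi⟩ := hy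
    refine tendsto_of_tendsto_of_tendsto_of_le_of_le' tendsto_const_nhds
      (tendsto_ramp_of_lt_one hyi) (Eventually.of_forall fun n => (rampProd_mem_Icc m n y).1) ?_
    filter_upwards [eventually_gt_atTop i] with n hn
    rw [rampProd, ← prod_erase_mul _ _ (mem_Ico.2 ⟨hmi, hn⟩)]
    exact mul_le_of_le_one_left (ramp_mem_Icc _ _).1 (prod_ramp_mem_Icc n _ y).2

lemma exists_lipschitzWith_rampProd (m n : ℕ) :
    ∃ φ : (Fin n → ℝ) → ℝ, (∃ K, LipschitzWith K φ) ∧ (∀ x, |φ x| ≤ 1) ∧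
      ∀ y : ℕ → ℝ, φ (fun i => y i) = rampProd m n y := by
  obtain ⟨φ, hφ, hφ01, hφy⟩ := exists_lipschitzWith_sum_mul_prod (lipschitzWith_ramp n)
    (ramp_mem_Icc n) (univ : Finset Unit) (fun _ => zero_le_one) (fun _ => m) n
  refine ⟨φ, hφ, fun x => abs_le.2 ⟨?_, ?_⟩, fun y => ?_⟩
  · linarith [(hφ01 x).1]
  · simpa using (hφ01 x).2
  · simp [hφy, rampProd]

section ConverseBorelCantelli

variable {S : SLE Ω} {X : ℕ → Ω → ℝ} {v : Set Ω → ℝ} {μ : ℕ → ℕ}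

lemma rampProd_mem (hX : ∀ n, X n ∈ S.H) (m n : ℕ) :
    (fun ω => rampProd m n (X · ω)) ∈ S.H := by
  obtain ⟨φ, ⟨K, hφ⟩, -, hφX⟩ := exists_lipschitzWith_rampProd m n
  simpa only [fun ω => hφX (X · ω)] using S.comp_mem_of_lipschitzWith hφ fun i : Fin n => hX i

lemma one_sub_le_E_ramp
    (hv : ∀ (A : Set Ω) (f : Ω → ℝ), f ∈ S.H →
      (∀ ω, f ω ≤ Set.indicator A (fun _ => (1 : ℝ)) ω) → S.eps f ≤ v A)
    {Z : Ω → ℝ} (hZ : Z ∈ S.H) (n : ℕ) :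
    1 - v {ω | Z ω < 1} ≤ S.E (fun ω => ramp n (Z ω)) := by
  have hramp := S.comp_mem_of_lipschitzWith₁ (lipschitzWith_ramp n) hZ
  have hf : (fun ω => 1 - ramp n (Z ω)) ∈ S.H :=
    S.comp_mem_of_lipschitzWith₁ ((LipschitzWith.const 1).sub (lipschitzWith_ramp n)) hZ
  have hle : ∀ ω, 1 - ramp n (Z ω) ≤ Set.indicator {ω | Z ω < 1} (fun _ => (1 : ℝ)) ω := by
    intro ω
    by_cases hω : Z ω < 1
    · rw [Set.indicator_of_mem (s := {ω | Z ω < 1}) hω]; linarith [(ramp_mem_Icc n (Z ω)).1]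
    · rw [Set.indicator_of_notMem (s := {ω | Z ω < 1}) hω, ramp_of_one_le n (not_lt.1 hω), sub_self]
  have h := hv _ _ hf hle
  have hneg : (fun ω => -(1 - ramp n (Z ω))) = fun ω => ramp n (Z ω) + -1 := by
    funext ω; ring
  rw [SLE.eps, hneg, SLE.E_add_const hramp] at h
  linarith

lemma E_sum_rampProd_ge (hX : ∀ n, X n ∈ S.H) (hind : IndepSeq S X)
    (hv : ∀ (A : Set Ω) (f : Ω → ℝ), f ∈ S.H →
      (∀ ω, f ω ≤ Set.indicator A (fun _ => (1 : ℝ)) ω) → S.eps f ≤ v A)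
    (hμ : ∀ r n, ∑ i ∈ Ico (μ r) n, v {ω | X i ω < 1} ≤ (1 / 4) ^ r) (j : ℕ) :
    ∑ r ∈ range j, (2 : ℝ) ^ r - 2 ≤
      S.E (fun ω => ∑ r ∈ range j, 2 ^ r * rampProd (μ r) j (X · ω)) := by
  have he : ∀ i, S.E (fun ω => ramp j (X i ω)) ∈ Set.Icc (0 : ℝ) 1 := fun i => by
    have hmem := S.comp_mem_of_lipschitzWith₁ (lipschitzWith_ramp j) (hX i)
    exact ⟨SLE.le_E_of_le hmem fun ω => (ramp_mem_Icc _ _).1,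
      SLE.E_le_of_le hmem fun ω => (ramp_mem_Icc _ _).2⟩
  have hprod : ∀ r, 1 - (1 / 4) ^ r ≤ ∏ i ∈ Ico (μ r) j, S.E (fun ω => ramp j (X i ω)) :=
    fun r => by
      refine le_trans ?_ (one_sub_sum_le_prod _ fun i _ => he i)
      have := sum_le_sum fun i (_ : i ∈ Ico (μ r) j) =>
        show 1 - S.E (fun ω => ramp j (X i ω)) ≤ v {ω | X i ω < 1} by
          linarith [one_sub_le_E_ramp hv (hX i) j]
      linarith [hμ r j]
  simp only [rampProd]
  rw [hind.E_sum_mul_prod hX (lipschitzWith_ramp j) (ramp_mem_Icc j) _ (fun r => by positivity)]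
  calc ∑ r ∈ range j, (2 : ℝ) ^ r - 2
      ≤ ∑ r ∈ range j, (2 : ℝ) ^ r - ∑ r ∈ range j, (1 / 2 : ℝ) ^ r := by
        linarith [sum_geometric_two_le j]
    _ = ∑ r ∈ range j, (2 : ℝ) ^ r * (1 - (1 / 4) ^ r) := by
        rw [← sum_sub_distrib]
        refine sum_congr rfl fun r _ => ?_
        rw [mul_sub, mul_one, ← mul_pow]
        norm_num
    _ ≤ _ := sum_le_sum fun r _ => mul_le_mul_of_nonneg_left (hprod r) (by positivity)

variable [MeasurableSpace Ω] {P : Set (Measure Ω)}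

lemma integrable_rampProd (hCC : CC S P) (hX : ∀ n, X n ∈ S.H) {p : Measure Ω} (hp : p ∈ P)
    (m n : ℕ) : Integrable (fun ω => rampProd m n (X · ω)) p :=
  hCC.integrable (rampProd_mem hX m n) (fun _ => abs_rampProd_le_one _ _ _) hp

lemma exists_mem_integral_rampProd_ge (hCC : CC S P) (hX : ∀ n, X n ∈ S.H)
    (hind : IndepSeq S X)
    (hv : ∀ (A : Set Ω) (f : Ω → ℝ), f ∈ S.H →
      (∀ ω, f ω ≤ Set.indicator A (fun _ => (1 : ℝ)) ω) → S.eps f ≤ v A)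
    (hμ : ∀ r n, ∑ i ∈ Ico (μ r) n, v {ω | X i ω < 1} ≤ (1 / 4) ^ r) (j : ℕ) :
    ∃ p ∈ P, ∀ r < j, 1 - 3 * (1 / 2) ^ r ≤ ∫ ω, rampProd (μ r) j (X · ω) ∂p := by
  obtain ⟨φ, ⟨K, hφ⟩, hφA, hφX⟩ := exists_lipschitzWith_sum_mul_prod (lipschitzWith_ramp j)
    (ramp_mem_Icc j) (range j) (a := fun r => (2 : ℝ) ^ r) (fun r => by positivity) μ j
  have hZ : (fun ω => ∑ r ∈ range j, 2 ^ r * rampProd (μ r) j (X · ω)) ∈ S.H := by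
    simpa only [rampProd, fun ω => hφX (X · ω)] using
      S.comp_mem_of_lipschitzWith hφ fun i : Fin j => hX i
  obtain ⟨p, hp, hpZ⟩ := hCC.exists_lt_integral hZ (M := ∑ r ∈ range j, (2 : ℝ) ^ r)
    (fun ω => by
      simp only [rampProd]
      rw [← hφX (X · ω)]
      exact abs_le.2 ⟨by linarith [(hφA (fun i => X i ω)).1, (hφA (fun i => X i ω)).2], (hφA _).2⟩)
    one_pos
  have := hCC.2.1 p hp
  set u := fun r => ∫ ω, rampProd (μ r) j (X · ω) ∂p
  have hu1 : ∀ r, u r ≤ 1 := fun r => by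
    simpa using integral_mono (integrable_rampProd hCC hX hp _ _) (integrable_const 1)
      fun ω => (rampProd_mem_Icc _ _ _).2
  rw [integral_finsetSum _ fun r _ => (integrable_rampProd hCC hX hp _ _).const_mul _] at hpZ
  simp only [integral_const_mul] at hpZ
  -- The total weighted deficit is at most `3`, hence so is each of its nonnegative terms.
  have hdef : ∑ r ∈ range j, 2 ^ r * (1 - u r) ≤ 3 := by
    simp only [mul_sub, mul_one, sum_sub_distrib]
    linarith [E_sum_rampProd_ge hX hind hv hμ j]
  refine ⟨p, hp, fun r hr => ?_⟩
  have hr3 : 2 ^ r * (1 - u r) ≤ 3 := (single_le_sum (f := fun r => (2 : ℝ) ^ r * (1 - u r))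
    (fun r _ => mul_nonneg (by positivity) (sub_nonneg.2 (hu1 r))) (mem_range.2 hr)).trans hdef
  have h2 : (1 / 2 : ℝ) ^ r * 2 ^ r = 1 := by rw [← mul_pow]; norm_num
  nlinarith [pow_pos (by norm_num : (0 : ℝ) < 1 / 2) r]

lemma exists_mem_integral_rampProd_ge_of_forall_lt (hCC : CC S P) (hX : ∀ n, X n ∈ S.H)
    {b : ℕ → ℝ} {p : ℕ → Measure Ω} (hp : ∀ j, p j ∈ P)
    (hpb : ∀ j, ∀ r < j, b r ≤ ∫ ω, rampProd (μ r) j (X · ω) ∂(p j)) :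
    ∃ Q ∈ P, ∀ r n, b r ≤ ∫ ω, rampProd (μ r) n (X · ω) ∂Q := by
  -- Weak compactness applies only to bounded variables; as `ramp n ∘ clamp01 = ramp n`, the
  -- bounded `clamp01 ∘ X i` suffice.
  have hY : ∀ i, (fun ω => clamp01 (X i ω)) ∈ S.H ∧ ∃ M, ∀ ω, |clamp01 (X i ω)| ≤ M :=
    fun i => ⟨S.comp_mem_of_lipschitzWith₁ lipschitzWith_clamp01 (hX i), 1, fun ω =>
      abs_le.2 ⟨by linarith [(clamp01_mem_Icc (X i ω)).1], (clamp01_mem_Icc _).2⟩⟩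
  obtain ⟨σ, hσ, Q, hQ, hconv⟩ := hCC.2.2.2 _ hY p hp
  refine ⟨Q, hQ, fun r n => ?_⟩
  obtain ⟨φ, hφ, hφ1, hφy⟩ := exists_lipschitzWith_rampProd (μ r) n
  have hlim := hconv n φ hφ ⟨1, hφ1⟩
  simp only [fun ω => hφy (fun i => clamp01 (X i ω)), rampProd, ramp_clamp01] at hlim
  refine ge_of_tendsto hlim ?_
  filter_upwards [eventually_gt_atTop (max r n)] with k hk
  have hk' : k ≤ σ k := hσ.id_le k
  calc b r ≤ ∫ ω, rampProd (μ r) (σ k) (X · ω) ∂(p (σ k)) := hpb _ r (by omega)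
    _ ≤ _ := integral_mono (integrable_rampProd hCC hX (hp _) _ _)
        (integrable_rampProd hCC hX (hp _) _ _) fun ω => rampProd_anti (by omega) _

lemma ofReal_le_measure_iInter (hCC : CC S P) (hX : ∀ n, X n ∈ S.H) {Q : Measure Ω}
    (hQ : Q ∈ P) {m : ℕ} {b : ℝ} (hb : ∀ n, b ≤ ∫ ω, rampProd m n (X · ω) ∂Q) :
    ENNReal.ofReal b ≤ Q (⋂ i, ⋂ (_ : m ≤ i), {ω | 1 ≤ X i ω}) := by
  have := hCC.2.1 Q hQ
  refine ofReal_le_measure_of_tendsto_indicator (integrable_rampProd hCC hX hQ m)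
    (fun _ _ => abs_rampProd_le_one _ _ _) (fun ω => ?_) hb
  convert tendsto_rampProd m (X · ω) using 2
  classical
  simp only [Set.indicator_apply, Set.mem_iInter, Set.mem_ofPred_eq, Pi.one_apply]

end ConverseBorelCantelli

/-- Converse Borel–Cantelli under condition (CC), part (i) of Lemma `lemBC2`. -/
theorem converse_borel_cantelli [MeasurableSpace Ω] (S : SLE Ω)
    (P : Set (Measure Ω)) (hCC : CC S P)
    (X : ℕ → Ω → ℝ) (hH : ∀ n, X n ∈ S.H) (hind : IndepSeq S X)
    (v : Set Ω → ℝ)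
    (hv : ∀ (A : Set Ω) (f : Ω → ℝ), f ∈ S.H →
      (∀ ω, f ω ≤ Set.indicator A (fun _ => (1 : ℝ)) ω) → S.eps f ≤ v A)
    (hsum : Summable (fun n => v {ω | X n ω < 1})) :
    ∃ p ∈ P, p (⋃ m : ℕ, ⋂ i : ℕ, ⋂ (_ : m ≤ i), {ω | 1 ≤ X i ω}) = 1 := by
  choose μ hμ using fun r : ℕ =>
    exists_forall_sum_Ico_le hsum (by positivity : (0 : ℝ) < (1 / 4) ^ r)
  choose p hp hpb using exists_mem_integral_rampProd_ge hCC hH hind hv hμ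
  obtain ⟨Q, hQ, hQb⟩ := exists_mem_integral_rampProd_ge_of_forall_lt hCC hH hp hpb
  have := hCC.2.1 Q hQ
  have hlim : Tendsto (fun r : ℕ => ENNReal.ofReal (1 - 3 * (1 / 2) ^ r)) atTop (nhds 1) := by
    simpa using ENNReal.tendsto_ofReal (((tendsto_pow_atTop_nhds_zero_of_lt_one
      (by norm_num : (0 : ℝ) ≤ 1 / 2) (by norm_num)).const_mul 3).const_sub 1)
  refine ⟨Q, hQ, le_antisymm prob_le_one (le_of_tendsto' hlim fun r => ?_)⟩
  exact (ofReal_le_measure_iInter hCC hH hQ (hQb r)).trans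
    (measure_mono (Set.subset_iUnion_of_subset (μ r) subset_rfl))

end
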